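/- arXiv:1805.05196 — 3 statements merged into one kernel-verified Lean document; each statement's English description precedes it below -/
import Mathlib

section
/- For positive integers a, b, c with a+b+c=n, let p(a,b,c) be the permutation defined by p_i = n+1-i for 1 ≤ i ≤ a, p_i = a+b+1-i for a+1 ≤ i ≤ a+b, and p_i = n+b+1-i for a+b+1 ≤ i ≤ n. If p(a,b,c) is a cyclic permutation, then a ≥ b and a ≥ c. -/
/-- A permutation of {1,...,n} is cyclic (a single n-cycle) iff it acts transitively. -/
def IsCyclicPerm {n : ℕ} (p : Equiv.Perm (Fin n)) : Prop :=
  ∀ x y : Fin n, ∃ m : ℕ, (p ^ m) x = y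

/-- `p` contains the pattern `q` (given as a word `q 0, q 1, ...`). -/
def Contains {n k : ℕ} (p : Equiv.Perm (Fin n)) (q : Fin k → Fin k) : Prop :=
  ∃ f : Fin k → Fin n, StrictMono f ∧ ∀ i j : Fin k, q i < q j ↔ p (f i) < p (f j)

def Avoids {n k : ℕ} (p : Equiv.Perm (Fin n)) (q : Fin k → Fin k) : Prop :=
  ¬ Contains p q

def pat123 : Fin 3 → Fin 3 := ![0, 1, 2]
def pat231 : Fin 3 → Fin 3 := ![1, 2, 0]
def pat132 : Fin 3 → Fin 3 := ![0, 2, 1]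
def pat321 : Fin 3 → Fin 3 := ![2, 1, 0]
def pat312 : Fin 3 → Fin 3 := ![2, 0, 1]

/-- `p` is the three-layer permutation of the triple `(a,b,c)`, in 0-based form:
`p_i = n+1-i` for `1 ≤ i ≤ a`, `p_i = a+b+1-i` for `a+1 ≤ i ≤ a+b`,
`p_i = n+b+1-i` for `a+b+1 ≤ i ≤ n` (1-based). -/
def IsTriplePerm (n a b : ℕ) (p : Equiv.Perm (Fin n)) : Prop :=
  ∀ i : Fin n, (p i : ℕ) =
    if (i : ℕ) < a then n - 1 - (i : ℕ)
    else if (i : ℕ) < a + b then a + b - 1 - (i : ℕ)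
    else n + b - 1 - (i : ℕ)

/-! If `b > a`, the block of indices `a, …, b - 1` lies inside the middle layer and is mapped
onto itself by the reversal `i ↦ a + b - 1 - i`; if `c > a`, the same happens to the block
`a + b, …, b + c - 1` inside the last layer. Either block is then a proper nonempty invariant
set missing `0`, which a single `n`-cycle cannot have. -/

open Set

theorem IsCyclicPerm.mem_of_mapsTo {n : ℕ} {p : Equiv.Perm (Fin n)} (hcyc : IsCyclicPerm p)
    {s : Set (Fin n)} (hs : MapsTo p s s) {x : Fin n} (hx : x ∈ s) (y : Fin n) : y ∈ s := by
  obtain ⟨m, rfl⟩ := hcyc x y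
  rw [Equiv.Perm.coe_pow]
  exact hs.iterate m hx

namespace IsTriplePerm

variable {n a b : ℕ} {p : Equiv.Perm (Fin n)}

theorem mapsTo_middle (hp : IsTriplePerm n a b p) :
    MapsTo p {i | a ≤ (i : ℕ) ∧ (i : ℕ) < b} {i | a ≤ (i : ℕ) ∧ (i : ℕ) < b} := by
  rintro i ⟨hai, hib⟩
  have h := hp i
  rw [if_neg (by omega), if_pos (by omega)] at h
  constructor <;> omega

theorem mapsTo_last (hp : IsTriplePerm n a b p) :
    MapsTo p {i | a + b ≤ (i : ℕ) ∧ (i : ℕ) + a < n}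
      {i | a + b ≤ (i : ℕ) ∧ (i : ℕ) + a < n} := by
  rintro i ⟨hi, hin⟩
  have h := hp i
  rw [if_neg (by omega), if_neg (by omega)] at h
  constructor <;> omega

end IsTriplePerm

theorem stmt4_general (n a b c : ℕ) (ha : 0 < a)
    (habc : a + b + c = n) (p : Equiv.Perm (Fin n))
    (hp : IsTriplePerm n a b p) (hcyc : IsCyclicPerm p) :
    b ≤ a ∧ c ≤ a := by
  constructor
  · by_contra! hab
    have hzero_mem := hcyc.mem_of_mapsTo hp.mapsTo_middle (x := ⟨a, by omega⟩)
      ⟨le_rfl, hab⟩ ⟨0, by omega⟩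
    exact absurd hzero_mem.1 (by dsimp only; omega)
  · by_contra! hac
    have hzero_mem := hcyc.mem_of_mapsTo hp.mapsTo_last (x := ⟨a + b, by omega⟩)
      ⟨le_rfl, by dsimp only; omega⟩ ⟨0, by omega⟩
    exact absurd hzero_mem.1 (by dsimp only; omega)

theorem stmt4 (n a b c : ℕ) (ha : 0 < a) (hb : 0 < b) (hc : 0 < c)
    (habc : a + b + c = n) (p : Equiv.Perm (Fin n))
    (hp : IsTriplePerm n a b p) (hcyc : IsCyclicPerm p) :
    b ≤ a ∧ c ≤ a :=
  stmt4_general n a b c ha habc p hp hcyc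
end

section
/- Let a, b, c be positive integers with a = b + c - 1, a ≥ c ≥ b, and gcd(b,c) = 1, and let n = a + b + c. Then the permutation p(a,b,c) of length n defined by p_i = n+1-i for 1 ≤ i ≤ a, p_i = a+b+1-i for a+1 ≤ i ≤ a+b, and p_i = n+b+1-i for a+b+1 ≤ i ≤ n, is a cyclic permutation. -/
/-!
Write `n = 2a + 1` and call `a, …, 2a` the top block. Reading `a + y` as `y ∈ ℤ/(a+1)`, the
permutation sends `a + y` to `a - r` with `r = (y + c) mod (a+1)`, and sends `a - r` back to
`a + r` when `r ≠ 0`. So the return map of the top block is the rotation `y ↦ y + c` of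
`ℤ/(a+1)`, a single cycle because `gcd(c, a+1) = gcd(c, b) = 1`, and every point below the
top block is passed through on the way.
-/

open Equiv Equiv.Perm

theorem isCyclicPerm_of_forall_sameCycle {n : ℕ} {p : Perm (Fin n)} (x₀ : Fin n)
    (h : ∀ x, p.SameCycle x₀ x) : IsCyclicPerm p :=
  fun x y => ((h x).symm.trans (h y)).exists_nat_pow_eq

theorem exists_isTriplePerm {n a b : ℕ} (h : a + b ≤ n) : ∃ p, IsTriplePerm n a b p := by
  let f : Fin n → Fin n := fun i =>
    ⟨if (i : ℕ) < a then n - 1 - i else if (i : ℕ) < a + b then a + b - 1 - i else n + b - 1 - i,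
      by split_ifs <;> omega⟩
  have hf : f.Injective := by
    intro i j hij
    simp only [f, Fin.mk.injEq] at hij
    ext
    split_ifs at hij <;> omega
  exact ⟨Equiv.ofBijective f (Finite.injective_iff_bijective.mp hf), fun _ => rfl⟩

namespace IsTriplePerm

variable {n a b c : ℕ} {p : Perm (Fin n)}

theorem apply_of_lt (hp : IsTriplePerm n a b p) {x : Fin n} (hx : (x : ℕ) < a) :
    (p x : ℕ) = n - 1 - x := by
  rw [hp x, if_pos hx]

theorem apply_of_le (hp : IsTriplePerm n a b p) (hn : n = a + b + c) (haeq : a + 1 = b + c)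
    {x : Fin n} (hx : a ≤ (x : ℕ)) : (p x : ℕ) = a - (x - a + c) % (a + 1) := by
  have hxn := x.isLt
  rw [hp x, if_neg (by omega)]
  by_cases hxb : (x : ℕ) < a + b
  · rw [if_pos hxb, Nat.mod_eq_of_lt (by omega)]
    omega
  · rw [if_neg hxb, Nat.mod_eq_sub_mod (by omega), Nat.mod_eq_of_lt (by omega)]
    omega

theorem sameCycle_of_add_mod (hp : IsTriplePerm n a b p) (hn : n = a + b + c)
    (haeq : a + 1 = b + c) {x y : Fin n} (hx : a ≤ (x : ℕ))
    (hy : (y : ℕ) = a + (x - a + c) % (a + 1)) : p.SameCycle x y := by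
  have hpx := hp.apply_of_le hn haeq hx
  have hr : ((x : ℕ) - a + c) % (a + 1) < a + 1 := Nat.mod_lt _ (by omega)
  by_cases hr0 : ((x : ℕ) - a + c) % (a + 1) = 0
  · have : p x = y := Fin.ext (by omega)
    exact this ▸ (SameCycle.refl p x).apply_right
  · have : p (p x) = y := Fin.ext (by rw [hp.apply_of_lt (by omega)]; omega)
    exact this ▸ (SameCycle.refl p x).apply_right.apply_right

theorem sameCycle_mul_mod (hp : IsTriplePerm n a b p) (hn : n = a + b + c)
    (haeq : a + 1 = b + c) {x₀ : Fin n} (hx₀ : (x₀ : ℕ) = a) (k : ℕ) {y : Fin n}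
    (hy : (y : ℕ) = a + k * c % (a + 1)) : p.SameCycle x₀ y := by
  induction k generalizing y with
  | zero =>
    rw [show y = x₀ from Fin.ext (by simp [hy, hx₀])]
  | succ k ih =>
    have hk : k * c % (a + 1) < a + 1 := Nat.mod_lt _ (by omega)
    let z : Fin n := ⟨a + k * c % (a + 1), by omega⟩
    refine (ih (y := z) rfl).trans (hp.sameCycle_of_add_mod hn haeq (by simp [z]) ?_)
    simp only [z, hy, Nat.add_sub_cancel_left, Nat.mod_add_mod, Nat.succ_mul]

theorem isCyclicPerm (hp : IsTriplePerm n a b p) (hn : n = a + b + c) (haeq : a + 1 = b + c)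
    (hcop : Nat.Coprime b c) : IsCyclicPerm p := by
  have hcop' : Nat.Coprime c (a + 1) := by
    rw [haeq, Nat.coprime_add_self_right]
    exact hcop.symm
  let x₀ : Fin n := ⟨a, by omega⟩
  have top : ∀ x : Fin n, a ≤ (x : ℕ) → p.SameCycle x₀ x := by
    intro x hx
    have hxn := x.isLt
    obtain ⟨k, -, hk⟩ := Nat.exists_mul_mod_eq_of_coprime ((x : ℕ) - a) hcop' (by omega)
    rw [Nat.mod_eq_of_lt (show (x : ℕ) - a < a + 1 by omega), mul_comm] at hk
    exact hp.sameCycle_mul_mod hn haeq rfl k (by omega)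
  refine isCyclicPerm_of_forall_sameCycle x₀ fun x => ?_
  by_cases hx : a ≤ (x : ℕ)
  · exact top x hx
  · rw [← sameCycle_apply_right]
    exact top (p x) (by rw [hp.apply_of_lt (by omega)]; omega)

end IsTriplePerm

theorem stmt10_general (n a b c : ℕ)
    (haeq : a + 1 = b + c)
    (hcop : Nat.gcd b c = 1) (hn : n = a + b + c) :
    ∃ p : Equiv.Perm (Fin n), IsTriplePerm n a b p ∧ IsCyclicPerm p := by
  obtain ⟨p, hp⟩ := exists_isTriplePerm (show a + b ≤ n by omega)
  exact ⟨p, hp, hp.isCyclicPerm hn haeq hcop⟩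

theorem stmt10 (n a b c : ℕ) (ha : 0 < a) (hb : 0 < b) (hc : 0 < c)
    (haeq : a + 1 = b + c) (hca : c ≤ a) (hbc : b ≤ c)
    (hcop : Nat.gcd b c = 1) (hn : n = a + b + c) :
    ∃ p : Equiv.Perm (Fin n), IsTriplePerm n a b p ∧ IsCyclicPerm p :=
  stmt10_general n a b c haeq hcop hn
end

section
/- For n ≥ 4, the number of cyclic permutations of length n avoiding both patterns 123 and 231 is at most (3n-6)/4. -/
/-!
A permutation avoiding 123 and 231 is determined by a pair `(a, b)` with `a + b < n`: it reverses
the top `a` values onto the first `a` positions, the bottom `b` values onto the next `b` positions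
and the remaining values onto the last `c = n - a - b` positions (`b = 0` gives the decreasing
permutation). So it suffices to bound the number of pairs whose permutation is an `n`-cycle.

Small 2-cycles force `1 ≤ b ≤ a`, `c ≤ a` and `2a ≤ n`. The first-return map `T` of the
permutation to the first block `[0, a)` is then transitive on `[0, a)`, and the involution `τ`
reversing the blocks `[0, a - b)` and `[c, a)` and fixing `[a - b, c)` conjugates it to its
inverse. On a single cycle such a reflection fixes at most two points, which forces `n ≤ 2a + 2`,
with `b` even when `n = 2a + 2`. Counting the admissible pairs gives the bound.
-/

open Finset

section Reflection

variable {α : Type*} {T τ : α → α}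

theorem iterate_reflect_iterate (hrev : ∀ v, T (τ (T v)) = τ v) (k : ℕ) (u : α) :
    T^[k] (τ (T^[k] u)) = τ u := by
  induction k with
  | zero => rfl
  | succ k ih => rw [Function.iterate_succ_apply, Function.iterate_succ_apply', hrev, ih]

theorem iterate_two_mul_eq_of_isFixedPt (hrev : ∀ v, T (τ (T v)) = τ v) {x : α}
    (hx : Function.IsFixedPt τ x) {k : ℕ} (hk : Function.IsFixedPt τ (T^[k] x)) :
    T^[2 * k] x = x := by
  rw [two_mul, Function.iterate_add_apply, ← hk, iterate_reflect_iterate hrev, hx]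

theorem two_mul_mod_minimalPeriod_eq (hrev : ∀ v, T (τ (T v)) = τ v) {x : α}
    (hx : Function.IsFixedPt τ x) {k : ℕ} (hk : Function.IsFixedPt τ (T^[k] x))
    (hne : T^[k] x ≠ x) :
    2 * (k % Function.minimalPeriod T x) = Function.minimalPeriod T x := by
  set P := Function.minimalPeriod T x
  have hk0 : k ≠ 0 := by
    rintro rfl
    exact hne rfl
  have hP : 0 < P := Function.IsPeriodicPt.minimalPeriod_pos (by omega)
    (iterate_two_mul_eq_of_isFixedPt hrev hx hk)
  rw [← Function.iterate_mod_minimalPeriod_eq] at hk hne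
  have hpos : k % P ≠ 0 := by
    intro h
    rw [h] at hne
    exact hne rfl
  have hlt := Nat.mod_lt k hP
  exact Nat.eq_of_dvd_of_lt_two_mul (by omega)
    (Function.IsPeriodicPt.minimalPeriod_dvd (iterate_two_mul_eq_of_isFixedPt hrev hx hk))
    (by omega)

/-- `hrev` says that `τ` conjugates `T` to its inverse, so on the orbit of `x` it acts as a
reflection of a cycle. -/
theorem eq_of_isFixedPt_of_reflect (hrev : ∀ v, T (τ (T v)) = τ v) {x y z : α}
    (hx : Function.IsFixedPt τ x) (hy : Function.IsFixedPt τ y) (hz : Function.IsFixedPt τ z)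
    (hxy : x ≠ y) (hxz : x ≠ z) (hy' : ∃ k, T^[k] x = y) (hz' : ∃ l, T^[l] x = z) : y = z := by
  obtain ⟨k, rfl⟩ := hy'
  obtain ⟨l, rfl⟩ := hz'
  have hk := two_mul_mod_minimalPeriod_eq hrev hx hy (Ne.symm hxy)
  have hl := two_mul_mod_minimalPeriod_eq hrev hx hz (Ne.symm hxz)
  rw [← Function.iterate_mod_minimalPeriod_eq, ← Function.iterate_mod_minimalPeriod_eq (n := l)]
  congr 1
  omega

theorem exists_iterate_eq_of_firstReturn {f : α → α} {S : Set α} {r : α → ℕ}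
    (hr : ∀ x ∈ S, 0 < r x) (hT : ∀ x ∈ S, f^[r x] x = T x) (hTS : ∀ x ∈ S, T x ∈ S)
    (hmiss : ∀ x ∈ S, ∀ i, 0 < i → i < r x → f^[i] x ∉ S) {x y : α} (hx : x ∈ S) (hy : y ∈ S)
    {m : ℕ} (hm : f^[m] x = y) : ∃ k, T^[k] x = y := by
  induction m using Nat.strong_induction_on generalizing x with
  | _ m ih =>
    rcases Nat.eq_zero_or_pos m with rfl | hm0
    · exact ⟨0, hm⟩
    have hrm : r x ≤ m := not_lt.1 fun h => hmiss x hx m hm0 h (hm ▸ hy)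
    have hr0 := hr x hx
    obtain ⟨k, hk⟩ := ih (m - r x) (by omega) (hTS x hx)
      (by rw [← hT x hx, ← Function.iterate_add_apply, Nat.sub_add_cancel hrm, hm])
    exact ⟨k + 1, hk⟩

end Reflection

theorem le_two_of_iterate_two {f : ℕ → ℕ} {n x : ℕ} (htrans : ∀ y < n, ∃ m, f^[m] x = y)
    (h : f (f x) = x) : n ≤ 2 := by
  have horbit : ∀ m, f^[m] x ∈ ({x, f x} : Finset ℕ) := by
    intro m
    induction m with
    | zero => simp
    | succ m ih =>
      rw [Function.iterate_succ_apply']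
      rcases mem_insert.1 ih with h' | h' <;> simp_all
  have hsub : range n ⊆ {x, f x} := fun y hy => by
    obtain ⟨m, rfl⟩ := htrans y (mem_range.1 hy)
    exact horbit m
  simpa using (card_le_card hsub).trans card_le_two

theorem IsCyclicPerm.exists_iterate_eq {n : ℕ} {p : Equiv.Perm (Fin n)} {f : ℕ → ℕ}
    (hc : IsCyclicPerm p) (hf : ∀ i, (p i : ℕ) = f i) {x y : ℕ} (hx : x < n) (hy : y < n) :
    ∃ m, f^[m] x = y := by
  have hpow : ∀ m (i : Fin n), ((p ^ m) i : ℕ) = f^[m] i := by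
    intro m
    induction m with
    | zero => simp
    | succ m ih =>
      intro i
      rw [pow_succ, Equiv.Perm.mul_apply, ih, hf, Function.iterate_succ_apply]
  obtain ⟨m, hm⟩ := hc ⟨x, hx⟩ ⟨y, hy⟩
  exact ⟨m, by simpa using hpow m ⟨x, hx⟩ ▸ congrArg Fin.val hm⟩

section Patterns

variable {n : ℕ} {p : Equiv.Perm (Fin n)}

theorem contains_of_three {q : Fin 3 → Fin 3} {i j k : Fin n} (hij : i < j) (hjk : j < k)
    (h : ∀ x y, q x < q y ↔ p (![i, j, k] x) < p (![i, j, k] y)) : Contains p q :=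
  ⟨![i, j, k], Fin.strictMono_iff_lt_succ.2 (by simp [Fin.forall_fin_two, hij, hjk]), h⟩

theorem Avoids.apply_lt_of_pat123 (h : Avoids p pat123) {i j k : Fin n} (hij : i < j)
    (hjk : j < k) (hp : p i < p j) : p k < p j := by
  refine lt_of_le_of_ne (not_lt.1 fun hp' => h (contains_of_three hij hjk ?_))
    (p.injective.ne hjk.ne')
  intro x y
  fin_cases x <;> fin_cases y <;>
    simp [pat123, hp, hp', hp.trans hp', hp.not_gt, hp'.not_gt, (hp.trans hp').not_gt]

theorem Avoids.apply_lt_of_pat231 (h : Avoids p pat231) {i j k : Fin n} (hij : i < j)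
    (hjk : j < k) (hp : p i < p j) : p i < p k := by
  refine lt_of_le_of_ne (not_lt.1 fun hp' => h (contains_of_three hij hjk ?_))
    (p.injective.ne (hij.trans hjk).ne)
  intro x y
  fin_cases x <;> fin_cases y <;>
    simp [pat231, hp, hp', hp'.trans hp, hp.not_gt, hp'.not_gt, (hp'.trans hp).not_gt]

end Patterns

theorem card_filter_apply_lt {n : ℕ} (p : Equiv.Perm (Fin n)) (y : Fin n) :
    #{m | p m < y} = y := by
  rw [← Fin.card_Iio y, ← filter_gt_eq_Iio]
  exact card_equiv p (by simp)

section Classification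

variable {n a : ℕ} {p : Equiv.Perm (Fin n)} {j : Fin n}

def ReversesPrefix (p : Equiv.Perm (Fin n)) (a : ℕ) : Prop :=
  ∀ i : Fin n, (i : ℕ) < a → (p i : ℕ) = n - 1 - i

/- Below, `p` reverses a prefix of length `a`, and `j` is the position of `n - 1 - a`, the largest
value left after that prefix. -/

theorem apply_le_of_reversesPrefix (hpre : ReversesPrefix p a)
    {x : Fin n} (hx : a ≤ x) : (p x : ℕ) ≤ n - 1 - a := by
  by_contra h
  have hi : n - 1 - (p x : ℕ) < n := by omega
  have hpi := hpre ⟨_, hi⟩ (by simp only; omega)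
  have hix : (⟨_, hi⟩ : Fin n) = x := p.injective (Fin.ext (by simp only at hpi; omega))
  simp only [Fin.ext_iff] at hix
  omega

theorem apply_lt_apply_of_reversesPrefix (hpre : ReversesPrefix p a)
    {m x : Fin n} (hm : (m : ℕ) < a) (hx : a ≤ x) : p x < p m := by
  have := apply_le_of_reversesPrefix hpre hx
  rw [Fin.lt_def, hpre m hm]
  omega

theorem apply_lt_apply_peak (hpre : ReversesPrefix p a)
    (hj : (p j : ℕ) = n - 1 - a) {x : Fin n} (hx : a ≤ x) (hxj : x ≠ j) : p x < p j :=
  lt_of_le_of_ne (by rw [Fin.le_def, hj]; exact apply_le_of_reversesPrefix hpre hx) (p.injective.ne hxj)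

theorem apply_lt_apply_of_lt_peak (h123 : Avoids p pat123)
    (hpre : ReversesPrefix p a) (hj : (p j : ℕ) = n - 1 - a)
    {x y : Fin n} (hx : a ≤ x) (hxy : x < y) (hyj : y < j) : p y < p x :=
  (lt_or_gt_of_ne (p.injective.ne hxy.ne')).resolve_right fun h =>
    (apply_lt_apply_peak hpre hj (hx.trans hxy.le) hyj.ne).not_gt (h123.apply_lt_of_pat123 hxy hyj h)

theorem apply_lt_apply_of_lt_peak_lt (h231 : Avoids p pat231)
    (hpre : ReversesPrefix p a) (hj : (p j : ℕ) = n - 1 - a)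
    {x k : Fin n} (hx : a ≤ x) (hxj : x < j) (hjk : j < k) : p x < p k :=
  h231.apply_lt_of_pat231 hxj hjk (apply_lt_apply_peak hpre hj hx hxj.ne)

theorem apply_lt_apply_of_peak_lt (h123 : Avoids p pat123) (h231 : Avoids p pat231)
    (hpre : ReversesPrefix p a) (hj : (p j : ℕ) = n - 1 - a)
    (haj : a < j) {k k' : Fin n} (hjk : j < k) (hkk' : k < k') : p k' < p k :=
  h123.apply_lt_of_pat123 (i := ⟨a, haj.trans j.isLt⟩) (haj.trans hjk) hkk'
    (apply_lt_apply_of_lt_peak_lt h231 hpre hj le_rfl haj hjk)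

theorem apply_eq_of_lt_peak (h123 : Avoids p pat123) (h231 : Avoids p pat231)
    (hpre : ReversesPrefix p a) (hj : (p j : ℕ) = n - 1 - a)
    {x : Fin n} (hx : a ≤ x) (hxj : x < j) : (p x : ℕ) = j - 1 - x := by
  have hset : ({m | p m < p x} : Finset (Fin n)) = Ioo x j := by
    ext m
    simp only [mem_filter, mem_univ, true_and, mem_Ioo]
    refine ⟨fun hm => ?_, fun ⟨hxm, hmj⟩ => apply_lt_apply_of_lt_peak h123 hpre hj hx hxm hmj⟩
    have hma : a ≤ (m : ℕ) := not_lt.1 fun h => (apply_lt_apply_of_reversesPrefix hpre h hx).not_gt hm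
    refine ⟨lt_of_not_ge fun hmx => ?_, lt_of_not_ge fun hjm => ?_⟩
    · rcases hmx.lt_or_eq with hmx | rfl
      · exact (apply_lt_apply_of_lt_peak h123 hpre hj hma hmx hxj).not_gt hm
      · exact lt_irrefl _ hm
    · rcases hjm.lt_or_eq with hjm | rfl
      · exact (apply_lt_apply_of_lt_peak_lt h231 hpre hj hx hxj hjm).not_gt hm
      · exact (apply_lt_apply_peak hpre hj hx hxj.ne).not_gt hm
  have hcard := card_filter_apply_lt p (p x)
  rw [hset, Fin.card_Ioo] at hcard
  omega

theorem apply_eq_of_peak_lt (h123 : Avoids p pat123) (h231 : Avoids p pat231)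
    (hpre : ReversesPrefix p a) (hj : (p j : ℕ) = n - 1 - a)
    (haj : a < j) {x : Fin n} (hjx : j < x) : (p x : ℕ) = n + (j - a) - 1 - x := by
  set a' : Fin n := ⟨a, haj.trans j.isLt⟩
  have hx : a ≤ x := (haj.trans hjx).le
  have hset : ({m | p m < p x} : Finset (Fin n)) = Ico a' j ∪ Ioi x := by
    ext m
    simp only [mem_filter, mem_univ, true_and, mem_union, mem_Ico, mem_Ioi]
    refine ⟨fun hm => ?_, ?_⟩
    · have hma : a' ≤ m := not_lt.1 fun h => (apply_lt_apply_of_reversesPrefix hpre h hx).not_gt hm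
      rcases lt_trichotomy m j with hmj | rfl | hjm
      · exact Or.inl ⟨hma, hmj⟩
      · exact absurd hm (apply_lt_apply_peak hpre hj hx hjx.ne').not_gt
      · refine Or.inr (lt_of_not_ge fun hmx => ?_)
        rcases hmx.lt_or_eq with hmx | rfl
        · exact (apply_lt_apply_of_peak_lt h123 h231 hpre hj haj hjm hmx).not_gt hm
        · exact lt_irrefl _ hm
    · rintro (⟨hma, hmj⟩ | hxm)
      · exact apply_lt_apply_of_lt_peak_lt h231 hpre hj hma hmj hjx
      · exact apply_lt_apply_of_peak_lt h123 h231 hpre hj haj hjx hxm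
  have hdisj : Disjoint (Ico a' j) (Ioi x) :=
    disjoint_left.2 fun m hm hm' => (mem_Ico.1 hm).2.not_gt ((mem_Ioi.1 hm').trans' hjx)
  have hcard := card_filter_apply_lt p (p x)
  rw [hset, card_union_of_disjoint hdisj, Fin.card_Ico, Fin.card_Ioi] at hcard
  have := x.isLt
  simp only [a'] at hcard
  omega

theorem isTriplePerm_of_avoids (h123 : Avoids p pat123) (h231 : Avoids p pat231)
    (hpre : ReversesPrefix p a) (hj : (p j : ℕ) = n - 1 - a)
    (haj : a < j) : IsTriplePerm n a (j - a) p := by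
  intro i
  rcases lt_or_ge (i : ℕ) a with hia | hai
  · rw [if_pos hia, hpre i hia]
  rcases lt_trichotomy i j with hij | rfl | hji
  · rw [if_neg (by omega), if_pos (by omega), apply_eq_of_lt_peak h123 h231 hpre hj hai hij]
    omega
  · rw [if_neg (by omega), if_neg (by omega), hj]
    omega
  · have hji' : (j : ℕ) < i := hji
    rw [if_neg (by omega), if_neg (by omega), apply_eq_of_peak_lt h123 h231 hpre hj haj hji]

theorem exists_isTriplePerm_s15 (hn : 0 < n) (h123 : Avoids p pat123) (h231 : Avoids p pat231) :
    ∃ a b, a + b < n ∧ IsTriplePerm n a b p := by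
  by_cases hrev : ∀ i : Fin n, (p i : ℕ) = n - 1 - i
  · exact ⟨0, 0, hn, fun i => by simp [hrev i]⟩
  push Not at hrev
  obtain ⟨k, hk, hmin⟩ := WellFounded.has_min wellFounded_lt _ hrev
  have hpre : ReversesPrefix p k := fun i hi => not_not.1 fun h => hmin i h hi
  set j := p.symm ⟨n - 1 - k, by omega⟩
  have hj : (p j : ℕ) = n - 1 - k := by simp [j]
  have hkj : (k : ℕ) < j := by
    rcases lt_trichotomy (j : ℕ) k with h | h | h
    · have := hpre j h
      omega
    · rw [Fin.ext h] at hj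
      exact absurd hj hk
    · exact h
  exact ⟨k, j - k, by omega, isTriplePerm_of_avoids h123 h231 hpre hj hkj⟩

end Classification

-- `IsTriplePerm n a b p` says that `p` acts on values as `tripleMap n a b`.
def tripleMap (n a b i : ℕ) : ℕ :=
  if i < a then n - 1 - i else if i < a + b then a + b - 1 - i else n + b - 1 - i

theorem tripleMap_bounds {n a b : ℕ} (hn : 3 ≤ n) (hab : a + b < n)
    (htrans : ∀ x < n, ∀ y < n, ∃ m, (tripleMap n a b)^[m] x = y) :
    1 ≤ b ∧ b ≤ a ∧ n ≤ 2 * a + b ∧ 2 * a ≤ n := by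
  have h2 : ∀ x < n, tripleMap n a b (tripleMap n a b x) ≠ x := fun x hx h => by
    have := le_two_of_iterate_two (htrans x hx) h
    omega
  -- each failing bound gives a 2-cycle through `n - 1`, `a`, `a + b` and `n - a` respectively
  refine ⟨?_, ?_, ?_, ?_⟩ <;> by_contra h
  · exact h2 (n - 1) (by omega) (by simp only [tripleMap]; split_ifs <;> omega)
  · exact h2 a (by omega) (by simp only [tripleMap]; split_ifs <;> omega)
  · exact h2 (a + b) (by omega) (by simp only [tripleMap]; split_ifs <;> omega)
  · exact h2 (n - a) (by omega) (by simp only [tripleMap]; split_ifs <;> omega)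

/- With `c = n - a - b`, `returnMap a b c` is the first-return map of `tripleMap n a b` to
`[0, a)`, reached after `returnTime a b c x` steps, and `returnReflection a b c` the involution
conjugating it to its inverse. Both are extended by the identity beyond `a`, so that
`returnMap_reflect` holds everywhere. -/
def returnMap (a b c x : ℕ) : ℕ :=
  if a ≤ x then x else if c ≤ x then x - c else if x + b < a then x + b else a - 1 - x

def returnTime (a b c x : ℕ) : ℕ := if c ≤ x ∨ x + b < a then 2 else 3

def returnReflection (a b c x : ℕ) : ℕ :=
  if a ≤ x then x else if x + b < a then a - b - 1 - x else if x < c then x else a + c - 1 - x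

theorem returnMap_reflect {a b c : ℕ} (h : a ≤ b + c) (v : ℕ) :
    returnMap a b c (returnReflection a b c (returnMap a b c v)) = returnReflection a b c v := by
  simp only [returnMap, returnReflection]
  split_ifs <;> omega

theorem returnReflection_of_le_of_lt {a b c x : ℕ} (hax : a ≤ x + b) (hxc : x < c) :
    returnReflection a b c x = x := by
  simp only [returnReflection]
  split_ifs <;> omega

theorem returnReflection_of_two_mul_add_one {a b c x : ℕ} (h : a ≤ b + c) (hcx : c ≤ x)
    (hx : 2 * x + 1 = a + c) : returnReflection a b c x = x := by
  simp only [returnReflection]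
  split_ifs <;> omega

theorem returnMap_lt {a b x : ℕ} (hx : x < a) (c : ℕ) : returnMap a b c x < a := by
  rw [returnMap]
  split_ifs <;> omega

section FirstReturn

variable {n a b x : ℕ}

theorem tripleMap_of_lt (hx : x < a) : tripleMap n a b x = n - 1 - x := if_pos hx

theorem tripleMap_of_le_of_lt (hax : a ≤ x) (hx : x < a + b) :
    tripleMap n a b x = a + b - 1 - x := by
  rw [tripleMap, if_neg (by omega), if_pos hx]

theorem tripleMap_of_le (hx : a + b ≤ x) : tripleMap n a b x = n + b - 1 - x := by
  rw [tripleMap, if_neg (by omega), if_neg (by omega)]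

theorem tripleMap_tripleMap (h2a : 2 * a ≤ n) (hab : a + b < n) (hx : x < a) :
    tripleMap n a b (tripleMap n a b x) = if n - a - b ≤ x then x - (n - a - b) else x + b := by
  rw [tripleMap_of_lt hx]
  split_ifs with h
  · rw [tripleMap_of_le_of_lt (by omega) (by omega)]
    omega
  · rw [tripleMap_of_le (by omega)]
    omega

theorem iterate_returnTime_tripleMap (h2a : 2 * a ≤ n) (hab : a + b < n) (hx : x < a) :
    (tripleMap n a b)^[returnTime a b (n - a - b) x] x = returnMap a b (n - a - b) x := by
  have h2 := tripleMap_tripleMap (b := b) h2a hab hx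
  rw [returnMap, if_neg (not_le.2 hx), returnTime]
  by_cases hc : n - a - b ≤ x
  · rw [if_pos hc] at h2
    rw [if_pos (Or.inl hc), if_pos hc]
    exact h2
  rw [if_neg hc] at h2 ⊢
  by_cases hb : x + b < a
  · rw [if_pos (Or.inr hb), if_pos hb]
    exact h2
  · rw [if_neg (by omega), if_neg hb, Function.iterate_succ_apply',
      show (tripleMap n a b)^[2] x = x + b from h2, tripleMap_of_le_of_lt (by omega) (by omega)]
    omega

theorem le_iterate_tripleMap_of_lt_returnTime (h2a : 2 * a ≤ n) (hab : a + b < n) (hx : x < a)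
    {i : ℕ} (hi : 0 < i) (hir : i < returnTime a b (n - a - b) x) :
    a ≤ (tripleMap n a b)^[i] x := by
  have h2 := tripleMap_tripleMap (b := b) h2a hab hx
  rw [returnTime] at hir
  obtain rfl | rfl : i = 1 ∨ i = 2 := by split_ifs at hir <;> omega
  · rw [Function.iterate_one, tripleMap_of_lt hx]
    omega
  · rw [show (tripleMap n a b)^[2] x = _ from h2]
    split_ifs at hir h2 ⊢ <;> omega

theorem exists_iterate_returnMap_eq (h2a : 2 * a ≤ n) (hab : a + b < n)
    (htrans : ∀ x < n, ∀ y < n, ∃ m, (tripleMap n a b)^[m] x = y) {y : ℕ} (hx : x < a)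
    (hy : y < a) : ∃ k, (returnMap a b (n - a - b))^[k] x = y := by
  obtain ⟨m, hm⟩ := htrans x (by omega) y (by omega)
  exact exists_iterate_eq_of_firstReturn (S := {x | x < a})
    (fun x _ => by rw [returnTime]; split_ifs <;> omega)
    (fun x hx => iterate_returnTime_tripleMap h2a hab hx) (fun x hx => returnMap_lt hx _)
    (fun x hx i hi hir => not_lt.2 (le_iterate_tripleMap_of_lt_returnTime h2a hab hx hi hir))
    hx hy hm

end FirstReturn

theorem tripleMap_reflection {n a b : ℕ} (hba : b ≤ a) (hc : n ≤ 2 * a + b) (h2a : 2 * a ≤ n)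
    (hab : a + b < n) (htrans : ∀ x < n, ∀ y < n, ∃ m, (tripleMap n a b)^[m] x = y) :
    n ≤ 2 * a + 2 ∧ (n = 2 * a + 2 → Even b) := by
  have hfix : ∀ {x y z}, x < a → y < a → z < a → returnReflection a b (n - a - b) x = x →
      returnReflection a b (n - a - b) y = y → returnReflection a b (n - a - b) z = z →
      x ≠ y → x ≠ z → y = z := fun hx hy hz hfx hfy hfz hxy hxz =>
    eq_of_isFixedPt_of_reflect (returnMap_reflect (by omega)) hfx hfy hfz hxy hxz
      (exists_iterate_returnMap_eq h2a hab htrans hx hy)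
      (exists_iterate_returnMap_eq h2a hab htrans hx hz)
  refine ⟨not_lt.1 fun h => ?_, fun h => Nat.even_iff.2 (by_contra fun hb => ?_)⟩
  · have := hfix (x := a - b) (y := a - b + 1) (z := a - b + 2) (by omega) (by omega) (by omega)
      (returnReflection_of_le_of_lt (by omega) (by omega))
      (returnReflection_of_le_of_lt (by omega) (by omega))
      (returnReflection_of_le_of_lt (by omega) (by omega)) (by omega) (by omega)
    omega
  · have := hfix (x := a - b) (y := a - b + 1) (z := (2 * a - b + 1) / 2) (by omega) (by omega)
      (by omega) (returnReflection_of_le_of_lt (by omega) (by omega))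
      (returnReflection_of_le_of_lt (by omega) (by omega))
      (returnReflection_of_two_mul_add_one (by omega) (by omega) (by omega)) (by omega) (by omega)
    omega

def AdmissibleTriple (n a b : ℕ) : Prop :=
  1 ≤ b ∧ a + b < n ∧ b ≤ a ∧ 2 * a ≤ n ∧ n ≤ 2 * a + 2 ∧ (n = 2 * a + 2 → Even b)

/- Codes `b - 1` (for `n = 2a, 2a + 1`) stay below `n / 2 - 1`, where the codes for
`n = 2a + 2` (with `b` even) begin. -/
def tripleCode (n a b : ℕ) : ℕ :=
  if n = 2 * a + 2 then n / 2 - 2 + b / 2 else b - 1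

theorem AdmissibleTriple.tripleCode_lt {n a b : ℕ} (hn : 4 ≤ n) (h : AdmissibleTriple n a b) :
    tripleCode n a b < (3 * n - 6) / 4 := by
  obtain ⟨hb, hab, hba, h2a, hn2, -⟩ := h
  unfold tripleCode
  split_ifs <;> omega

theorem AdmissibleTriple.eq_of_tripleCode_eq {n a b a' b' : ℕ} (h : AdmissibleTriple n a b)
    (h' : AdmissibleTriple n a' b') (heq : tripleCode n a b = tripleCode n a' b') :
    a = a' ∧ b = b' := by
  obtain ⟨hb, hab, hba, h2a, hn2, hpar⟩ := h
  obtain ⟨hb', hab', hba', h2a', hn2', hpar'⟩ := h'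
  simp only [Nat.even_iff] at hpar hpar'
  unfold tripleCode at heq
  split_ifs at heq with hn hn' hn'
  · have := hpar hn
    have := hpar' hn'
    omega
  · have := hpar hn
    omega
  · have := hpar' hn'
    omega
  · omega

theorem IsTriplePerm.unique {n a b : ℕ} {p q : Equiv.Perm (Fin n)} (hp : IsTriplePerm n a b p)
    (hq : IsTriplePerm n a b q) : p = q :=
  Equiv.ext fun i => Fin.ext ((hp i).trans (hq i).symm)

theorem IsTriplePerm.admissibleTriple {n a b : ℕ} {p : Equiv.Perm (Fin n)} (hn : 3 ≤ n)
    (hab : a + b < n) (ht : IsTriplePerm n a b p) (hc : IsCyclicPerm p) :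
    AdmissibleTriple n a b := by
  have htrans : ∀ x < n, ∀ y < n, ∃ m, (tripleMap n a b)^[m] x = y :=
    fun x hx y hy => hc.exists_iterate_eq (f := tripleMap n a b) ht hx hy
  obtain ⟨hb, hba, hca, h2a⟩ := tripleMap_bounds hn hab htrans
  obtain ⟨hn2, hpar⟩ := tripleMap_reflection hba hca h2a hab htrans
  exact ⟨hb, hab, hba, h2a, hn2, hpar⟩

theorem stmt15 (n : ℕ) (hn : 4 ≤ n) :
    Nat.card {p : Equiv.Perm (Fin n) //
        IsCyclicPerm p ∧ Avoids p pat123 ∧ Avoids p pat231} ≤ (3 * n - 6) / 4 := by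
  have key : ∀ P : {p : Equiv.Perm (Fin n) // IsCyclicPerm p ∧ Avoids p pat123 ∧ Avoids p pat231},
      ∃ a b, AdmissibleTriple n a b ∧ IsTriplePerm n a b P.1 := by
    rintro ⟨p, hc, h123, h231⟩
    obtain ⟨a, b, hab, ht⟩ := exists_isTriplePerm_s15 (by omega) h123 h231
    exact ⟨a, b, ht.admissibleTriple (by omega) hab hc, ht⟩
  choose a b hadm ht using key
  have hinj : Function.Injective fun P => tripleCode n (a P) (b P) := fun P Q hPQ => by
    obtain ⟨ha, hb⟩ := (hadm P).eq_of_tripleCode_eq (hadm Q) hPQ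
    exact Subtype.ext ((ht P).unique (ha ▸ hb ▸ ht Q))
  calc _ ≤ Nat.card (Fin ((3 * n - 6) / 4)) :=
        Nat.card_le_card_of_injective (fun P => ⟨_, (hadm P).tripleCode_lt hn⟩)
          fun P Q h => hinj (congrArg Fin.val h)
    _ = _ := Nat.card_eq_fintype_card.trans (Fintype.card_fin _)
end
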